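/- arXiv:2005.09933 — 5 statements merged into one kernel-verified Lean document; each statement's English description precedes it below -/
import Mathlib

section
/- For all x, y in [0,1] with x ≤ y, the integral over δ in [0,1] of max({x+δ}, {y+δ}) dδ equals 1/2 + (y - x) - (y - x)^2, where {t} denotes the fractional part of t. -/
open MeasureTheory

theorem integral_max_fract (x y : ℝ) (hx : x ∈ Set.Icc (0:ℝ) 1)
    (hy : y ∈ Set.Icc (0:ℝ) 1) (hxy : x ≤ y) :
    ∫ δ in (0:ℝ)..1, max (Int.fract (x + δ)) (Int.fract (y + δ))
      = 1 / 2 + (y - x) - (y - x) ^ 2 := by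
  obtain ⟨hx0, hx1⟩ := hx
  obtain ⟨hy0, hy1⟩ := hy
  set f : ℝ → ℝ := fun δ => max (Int.fract (x + δ)) (Int.fract (y + δ)) with hf
  have hmeas : Measurable f := by
    exact (measurable_fract.comp (measurable_const.add measurable_id)).max
      (measurable_fract.comp (measurable_const.add measurable_id))
  have hint : ∀ a b : ℝ, IntervalIntegrable f volume a b := by
    intro a b
    rw [intervalIntegrable_iff]
    refine Measure.integrableOn_of_bounded (M := 1) ?_ ?_ ?_
    · exact ((measure_mono Set.uIoc_subset_uIcc).trans_lt measure_Icc_lt_top).ne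
    · exact hmeas.aestronglyMeasurable
    · filter_upwards with δ
      have h1 := Int.fract_nonneg (x + δ)
      have h2 := (Int.fract_lt_one (x + δ)).le
      have h3 := Int.fract_nonneg (y + δ)
      have h4 := (Int.fract_lt_one (y + δ)).le
      simp only [hf, Real.norm_eq_abs, abs_le]
      simp only [max_le_iff, le_max_iff]
      exact ⟨Or.inl (by linarith), h2, h4⟩
  -- split
  have hsplit : (∫ δ in (0:ℝ)..1, f δ)
      = (∫ δ in (0:ℝ)..(1 - y), f δ) + (∫ δ in (1 - y)..(1 - x), f δ)
        + (∫ δ in (1 - x)..(1:ℝ), f δ) := by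
    rw [intervalIntegral.integral_add_adjacent_intervals (hint _ _) (hint _ _),
      intervalIntegral.integral_add_adjacent_intervals (hint _ _) (hint _ _)]
  have fract_self : ∀ t : ℝ, 0 ≤ t → t < 1 → Int.fract t = t := fun t h0 h1 =>
    Int.fract_eq_self.2 ⟨h0, h1⟩
  have fract_sub : ∀ t : ℝ, 1 ≤ t → t < 2 → Int.fract t = t - 1 := by
    intro t h0 h1
    have : Int.fract t = Int.fract (t - (1:ℤ)) := (Int.fract_sub_intCast t 1).symm
    rw [this]
    push_cast
    exact Int.fract_eq_self.2 ⟨by linarith, by linarith⟩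
  -- piece 1
  have h1 : (∫ δ in (0:ℝ)..(1 - y), f δ) = ∫ δ in (0:ℝ)..(1 - y), (y + δ) := by
    apply intervalIntegral.integral_congr_ae
    have hne : ∀ᵐ δ : ℝ, δ ≠ 1 - y :=
      compl_mem_ae_iff.2 (Real.volume_singleton)
    filter_upwards [hne] with δ hne hδ
    rw [Set.uIoc_of_le (by linarith)] at hδ
    obtain ⟨hδ0, hδ1⟩ := hδ
    have hδ1' : δ < 1 - y := lt_of_le_of_ne hδ1 hne
    have e1 : Int.fract (x + δ) = x + δ := fract_self _ (by linarith) (by linarith)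
    have e2 : Int.fract (y + δ) = y + δ := fract_self _ (by linarith) (by linarith)
    simp only [hf, e1, e2]
    exact max_eq_right (by linarith)
  -- piece 2
  have h2 : (∫ δ in (1 - y)..(1 - x), f δ) = ∫ δ in (1 - y)..(1 - x), (x + δ) := by
    apply intervalIntegral.integral_congr_ae
    have hne : ∀ᵐ δ : ℝ, δ ≠ 1 - x :=
      compl_mem_ae_iff.2 (Real.volume_singleton)
    filter_upwards [hne] with δ hne hδ
    rw [Set.uIoc_of_le (by linarith)] at hδ
    obtain ⟨hδ0, hδ1⟩ := hδ
    have hδ1' : δ < 1 - x := lt_of_le_of_ne hδ1 hne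
    have e1 : Int.fract (x + δ) = x + δ := fract_self _ (by linarith) (by linarith)
    have e2 : Int.fract (y + δ) = y + δ - 1 := fract_sub _ (by linarith) (by linarith)
    simp only [hf, e1, e2]
    exact max_eq_left (by linarith)
  -- piece 3
  have h3 : (∫ δ in (1 - x)..(1:ℝ), f δ) = ∫ δ in (1 - x)..(1:ℝ), (y + δ - 1) := by
    apply intervalIntegral.integral_congr_ae
    have hne : ∀ᵐ δ : ℝ, δ ≠ 1 :=
      compl_mem_ae_iff.2 (Real.volume_singleton)
    filter_upwards [hne] with δ hne hδ
    rw [Set.uIoc_of_le (by linarith)] at hδ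
    obtain ⟨hδ0, hδ1⟩ := hδ
    have hδ1' : δ < 1 := lt_of_le_of_ne hδ1 hne
    have e1 : Int.fract (x + δ) = x + δ - 1 := fract_sub _ (by linarith) (by linarith)
    have e2 : Int.fract (y + δ) = y + δ - 1 := fract_sub _ (by linarith) (by linarith)
    simp only [hf, e1, e2]
    exact max_eq_right (by linarith)
  have lin : ∀ a b c : ℝ, (∫ δ in a..b, (c + δ)) = c * (b - a) + (b ^ 2 - a ^ 2) / 2 := by
    intro a b c
    rw [intervalIntegral.integral_add (intervalIntegrable_const) intervalIntegral.intervalIntegrable_id,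
      intervalIntegral.integral_const, integral_id, smul_eq_mul]
    ring
  have lin2 : ∀ a b c : ℝ, (∫ δ in a..b, (c + δ - 1)) = (c - 1) * (b - a) + (b ^ 2 - a ^ 2) / 2 := by
    intro a b c
    have : (fun δ : ℝ => c + δ - 1) = fun δ : ℝ => (c - 1) + δ := by funext δ; ring
    rw [show (∫ δ in a..b, (c + δ - 1)) = ∫ δ in a..b, ((c - 1) + δ) by rw [this], lin]
  rw [hsplit, h1, h2, h3, lin, lin, lin2]
  ring
end

section
/- Let m ≥ 1, x_k = k/2^m, and y_k = φ₂(k) (base-2 radical inverse) for k = 0,...,2^m−1. Then ∑_{k=0}^{2^m−1} x_k·y_k = 2^{m−2} + m/8 − 1/2 + 1/2^{m+2}. -/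
/-!
Splitting `k < 2^(m+1)` by parity, `phi2 (2j) = phi2 j / 2` and `phi2 (2j+1) = 1/2 + phi2 j / 2`
turn `T m = ∑_{k < 2^m} k · phi2 k` into the linear recursion
`T (m+1) = 2 T m + (∑_{j < 2^m} phi2 j) / 2 + ∑_{j < 2^m} j + 2^m / 2`,
whose inhomogeneous terms are elementary sums; induction on `m` gives a closed form for `T m`,
and the theorem is `T m / 2^m`.
-/

/-- The base-2 digit reversal (radical inverse) function. -/
noncomputable def phi2 (k : ℕ) : ℝ :=
  ∑ i ∈ Finset.range (k + 1), if Nat.testBit k i then (1 : ℝ) / 2 ^ (i + 1) else 0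

open Finset

theorem sum_range_two_mul {M : Type*} [AddCommMonoid M] (f : ℕ → M) (n : ℕ) :
    ∑ k ∈ range (2 * n), f k = ∑ j ∈ range n, (f (2 * j) + f (2 * j + 1)) := by
  induction n with
  | zero => simp
  | succ n ih =>
    rw [show 2 * (n + 1) = 2 * n + 1 + 1 by ring, sum_range_succ, sum_range_succ, ih,
      sum_range_succ, add_assoc]

theorem sum_range_natCast (n : ℕ) : ∑ j ∈ range n, (j : ℝ) = n * (n - 1) / 2 := by
  induction n with
  | zero => simp
  | succ n ih => rw [sum_range_succ, ih]; push_cast; ring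

theorem phi2_eq_sum_range {k n : ℕ} (h : k < n) :
    phi2 k = ∑ i ∈ range n, if Nat.testBit k i then (1 : ℝ) / 2 ^ (i + 1) else 0 := by
  refine sum_subset (range_subset_range.2 h) fun i _ hi => ?_
  have hki : k < 2 ^ i := (by simpa using hi : k < i).trans Nat.lt_two_pow_self
  simp [Nat.testBit_lt_two_pow hki]

theorem phi2_bit (b : Bool) (j : ℕ) : phi2 (Nat.bit b j) = b.toNat / 2 + phi2 j / 2 := by
  rw [phi2_eq_sum_range (n := 2 * j + 2) (by rw [Nat.bit_val]; cases b <;> simp),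
    sum_range_succ', phi2_eq_sum_range (n := 2 * j + 1) (by omega), sum_div, add_comm]
  simp only [Nat.testBit_bit_succ, Nat.testBit_bit_zero]
  congr 1
  · cases b <;> norm_num
  · refine sum_congr rfl fun i _ => ?_
    split_ifs <;> ring

theorem phi2_two_mul (j : ℕ) : phi2 (2 * j) = phi2 j / 2 := by
  simpa [Nat.bit_val] using phi2_bit false j

theorem phi2_two_mul_add_one (j : ℕ) : phi2 (2 * j + 1) = 1 / 2 + phi2 j / 2 := by
  simpa [Nat.bit_val] using phi2_bit true j

theorem sum_phi2_range_two_pow (m : ℕ) : ∑ k ∈ range (2 ^ m), phi2 k = (2 ^ m - 1) / 2 := by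
  induction m with
  | zero => simp [phi2]
  | succ m ih =>
    have hpair : ∀ j, phi2 (2 * j) + phi2 (2 * j + 1) = phi2 j + 1 / 2 := fun j => by
      rw [phi2_two_mul, phi2_two_mul_add_one]; ring
    rw [pow_succ', sum_range_two_mul, sum_congr rfl fun j _ => hpair j, sum_add_distrib, ih,
      sum_const, card_range, nsmul_eq_mul]
    push_cast
    ring

theorem sum_mul_phi2_range_two_pow (m : ℕ) :
    ∑ k ∈ range (2 ^ m), (k : ℝ) * phi2 k
      = (2 ^ m) ^ 2 / 4 + m * 2 ^ m / 8 - 2 ^ m / 2 + 1 / 4 := by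
  induction m with
  | zero => norm_num [phi2]
  | succ m ih =>
    have hpair : ∀ j : ℕ,
        ((2 * j : ℕ) : ℝ) * phi2 (2 * j) + ((2 * j + 1 : ℕ) : ℝ) * phi2 (2 * j + 1)
          = 2 * (j * phi2 j) + phi2 j / 2 + j + 1 / 2 := fun j => by
      rw [phi2_two_mul, phi2_two_mul_add_one]; push_cast; ring
    rw [pow_succ', sum_range_two_mul]
    simp only [hpair, sum_add_distrib, ← mul_sum, ← sum_div, ih, sum_phi2_range_two_pow,
      sum_range_natCast, sum_const, card_range, nsmul_eq_mul]
    push_cast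
    ring

theorem hammersley_S3_general (m : ℕ) :
    ∑ k ∈ Finset.range (2 ^ m), ((k : ℝ) / 2 ^ m) * phi2 k
      = (2:ℝ) ^ m / 4 + (m : ℝ) / 8 - 1 / 2 + 1 / 2 ^ (m + 2) := by
  simp only [div_mul_eq_mul_div, ← sum_div, sum_mul_phi2_range_two_pow]
  field_simp
  ring

theorem hammersley_S3 (m : ℕ) (hm : 1 ≤ m) :
    ∑ k ∈ Finset.range (2 ^ m), ((k : ℝ) / 2 ^ m) * phi2 k
      = (2:ℝ) ^ m / 4 + (m : ℝ) / 8 - 1 / 2 + 1 / 2 ^ (m + 2) :=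
  hammersley_S3_general m
end

section
/- Let m ≥ 1, x_k = k/2^m, and y_k = φ₂(k) for k = 0,...,2^m−1. Then ∑_{k,l=0}^{2^m−1} x_k·|y_k − y_l| = (2^m − 1)²(2^m + 1)/(6·2^m). -/
open Finset

lemma sum_range_comp_of_injOn {M : Type*} [AddCommMonoid M] {N : ℕ} {σ : ℕ → ℕ}
    (hσ : ∀ k < N, σ k < N) (hinj : Set.InjOn σ (range N)) (g : ℕ → M) :
    ∑ k ∈ range N, g (σ k) = ∑ i ∈ range N, g i := by
  have hmaps : Set.MapsTo σ (range N) (range N) := fun k hk => by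
    simpa using hσ k (by simpa using hk)
  exact sum_nbij σ (fun _ hk => hmaps hk) hinj
    (surjOn_of_injOn_of_card_le σ hmaps hinj le_rfl) fun _ _ => rfl

lemma sum_range_mul_eq_of_reflect {N : ℕ} {f : ℕ → ℝ} (hf : ∀ k < N, f (N - 1 - k) = f k) :
    ∑ k ∈ range N, (k : ℝ) * f k = ((N : ℝ) - 1) / 2 * ∑ k ∈ range N, f k := by
  have hreflect : ∑ k ∈ range N, (k : ℝ) * f k = ∑ k ∈ range N, ((N : ℝ) - 1 - k) * f k := by
    conv_lhs => rw [← sum_range_reflect]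
    refine sum_congr rfl fun k hk => ?_
    have hk := mem_range.mp hk
    rw [hf k hk, Nat.cast_sub (by omega), Nat.cast_sub (by omega), Nat.cast_one]
  have htwice : 2 * ∑ k ∈ range N, (k : ℝ) * f k = ((N : ℝ) - 1) * ∑ k ∈ range N, f k := by
    rw [two_mul]
    nth_rewrite 2 [hreflect]
    rw [← sum_add_distrib, mul_sum]
    exact sum_congr rfl fun _ _ => by ring
  linarith

lemma sum_range_abs_sub_reflect {N i : ℕ} (hi : i < N) :
    ∑ j ∈ range N, |((N - 1 - i : ℕ) : ℝ) - j| = ∑ j ∈ range N, |(i : ℝ) - j| := by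
  conv_rhs => rw [← sum_range_reflect]
  refine sum_congr rfl fun j hj => ?_
  have hj := mem_range.mp hj
  rw [Nat.cast_sub (show i ≤ N - 1 by omega), Nat.cast_sub (show j ≤ N - 1 by omega),
    Nat.cast_pred (by omega), abs_sub_comm]
  ring_nf

lemma sum_range_abs_natCast_sub (n : ℕ) : ∑ j ∈ range n, |(n : ℝ) - j| = n * (n + 1) / 2 := by
  induction n with
  | zero => simp
  | succ n ih =>
    have hshift : ∀ j ∈ range n, |((n + 1 : ℕ) : ℝ) - j| = |(n : ℝ) - j| + 1 := by
      intro j hj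
      have : (j : ℝ) < n := by exact_mod_cast mem_range.mp hj
      push_cast
      rw [abs_of_pos (by linarith), abs_of_pos (by linarith)]
      ring
    rw [sum_range_succ, sum_congr rfl hshift, sum_add_distrib, ih]
    simp only [sum_const, card_range, nsmul_eq_mul]
    push_cast
    rw [add_sub_cancel_left, abs_one]
    ring

lemma sum_range_sum_range_abs_sub (n : ℕ) :
    ∑ i ∈ range n, ∑ j ∈ range n, |(i : ℝ) - j| = n * (n ^ 2 - 1) / 3 := by
  induction n with
  | zero => simp
  | succ n ih =>
    simp only [sum_range_succ, sum_add_distrib, sub_self, abs_zero, add_zero, ih]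
    simp only [abs_sub_comm _ (n : ℝ), sum_range_abs_natCast_sub]
    push_cast
    ring

theorem sum_sum_mul_abs_sub_of_reflect {N : ℕ} {σ : ℕ → ℕ} (hσ : ∀ k < N, σ k < N)
    (hinj : Set.InjOn σ (range N)) (hreflect : ∀ k < N, σ (N - 1 - k) = N - 1 - σ k) :
    ∑ k ∈ range N, ∑ l ∈ range N, (k : ℝ) * |(σ k : ℝ) - σ l|
      = ((N : ℝ) - 1) * N * (N ^ 2 - 1) / 6 := by
  set g : ℕ → ℝ := fun i => ∑ j ∈ range N, |(i : ℝ) - j|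
  have hrow : ∀ k, ∑ l ∈ range N, |(σ k : ℝ) - σ l| = g (σ k) := fun k =>
    sum_range_comp_of_injOn hσ hinj fun j => |(σ k : ℝ) - j|
  have hsymm : ∀ k < N, g (σ (N - 1 - k)) = g (σ k) := fun k hk => by
    rw [hreflect k hk]
    exact sum_range_abs_sub_reflect (hσ k hk)
  calc ∑ k ∈ range N, ∑ l ∈ range N, (k : ℝ) * |(σ k : ℝ) - σ l|
      = ∑ k ∈ range N, (k : ℝ) * g (σ k) := by simp only [← mul_sum, hrow]
    _ = ((N : ℝ) - 1) / 2 * ∑ k ∈ range N, g (σ k) := sum_range_mul_eq_of_reflect hsymm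
    _ = ((N : ℝ) - 1) / 2 * ∑ i ∈ range N, g i := by rw [sum_range_comp_of_injOn hσ hinj g]
    _ = ((N : ℝ) - 1) * N * (N ^ 2 - 1) / 6 := by rw [sum_range_sum_range_abs_sub]; ring

def bitRev : ℕ → ℕ → ℕ
  | 0, _ => 0
  | m + 1, k => k % 2 * 2 ^ m + bitRev m (k / 2)

lemma bitRev_lt (m k : ℕ) : bitRev m k < 2 ^ m := by
  induction m generalizing k with
  | zero => simp [bitRev]
  | succ m ih =>
    have := ih (k / 2)
    rw [bitRev, pow_succ]
    rcases Nat.mod_two_eq_zero_or_one k with h | h <;> rw [h] <;> omega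

lemma bitRev_injOn (m : ℕ) : Set.InjOn (bitRev m) (range (2 ^ m)) := by
  induction m with
  | zero => intro k hk k' hk' _; simp_all
  | succ m ih =>
    intro k hk k' hk' h
    simp only [coe_range, Set.mem_Iio, pow_succ] at hk hk'
    have := bitRev_lt m (k / 2)
    have := bitRev_lt m (k' / 2)
    simp only [bitRev] at h
    have hmod : k % 2 = k' % 2 := by
      rcases Nat.mod_two_eq_zero_or_one k with ha | ha <;>
        rcases Nat.mod_two_eq_zero_or_one k' with hb | hb <;>
          simp only [ha, hb] at h ⊢ <;> omega
    have hhalf : bitRev m (k / 2) = bitRev m (k' / 2) := by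
      rw [hmod] at h
      exact Nat.add_left_cancel h
    have := ih (by simpa using (by omega : k / 2 < 2 ^ m))
      (by simpa using (by omega : k' / 2 < 2 ^ m)) hhalf
    omega

lemma bitRev_two_pow_sub_one_sub (m : ℕ) {k : ℕ} (hk : k < 2 ^ m) :
    bitRev m (2 ^ m - 1 - k) = 2 ^ m - 1 - bitRev m k := by
  induction m generalizing k with
  | zero => simp [bitRev]
  | succ m ih =>
    rw [pow_succ] at hk ⊢
    have hdiv : (2 ^ m * 2 - 1 - k) / 2 = 2 ^ m - 1 - k / 2 := by omega
    have hmod : (2 ^ m * 2 - 1 - k) % 2 = 1 - k % 2 := by omega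
    have := bitRev_lt m (k / 2)
    simp only [bitRev]
    rw [hdiv, hmod, ih (by omega)]
    rcases Nat.mod_two_eq_zero_or_one k with h | h <;> simp only [h] <;> omega

lemma sum_range_testBit_eq_of_lt {k a b : ℕ} (hab : a ≤ b) (hk : k < 2 ^ a) :
    ∑ i ∈ range b, (if k.testBit i then (1 : ℝ) / 2 ^ (i + 1) else 0)
      = ∑ i ∈ range a, if k.testBit i then (1 : ℝ) / 2 ^ (i + 1) else 0 := by
  refine (sum_subset (range_subset_range.mpr hab) fun i _ hi => ?_).symm
  have hi : a ≤ i := by simpa using hi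
  rw [Nat.testBit_lt_two_pow (hk.trans_le (Nat.pow_le_pow_right two_pos hi))]
  rfl

lemma sum_range_testBit_eq_bitRev (m k : ℕ) :
    ∑ i ∈ range m, (if k.testBit i then (1 : ℝ) / 2 ^ (i + 1) else 0)
      = bitRev m k / 2 ^ m := by
  induction m generalizing k with
  | zero => simp [bitRev]
  | succ m ih =>
    have hhalve : ∀ i, (if (k / 2).testBit i then (1 : ℝ) / 2 ^ (i + 1 + 1) else 0)
        = (if (k / 2).testBit i then (1 : ℝ) / 2 ^ (i + 1) else 0) / 2 := fun i => by
      split_ifs <;> ring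
    simp only [sum_range_succ', Nat.testBit_succ, hhalve, ← sum_div, ih, Nat.testBit_zero, bitRev]
    rcases Nat.mod_two_eq_zero_or_one k with h | h <;> simp [h] <;> field_simp <;> ring

lemma phi2_eq_bitRev {m k : ℕ} (hk : k < 2 ^ m) : phi2 k = bitRev m k / 2 ^ m := by
  have hk' : k < 2 ^ (k + 1) := Nat.lt_two_pow_self.trans (Nat.pow_lt_pow_succ one_lt_two)
  rw [phi2, ← sum_range_testBit_eq_bitRev, ← sum_range_testBit_eq_of_lt (le_max_left _ m) hk',
    sum_range_testBit_eq_of_lt (le_max_right _ m) hk]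

theorem hammersley_S7_general (m : ℕ) :
    ∑ k ∈ Finset.range (2 ^ m), ∑ l ∈ Finset.range (2 ^ m),
      ((k : ℝ) / 2 ^ m) * |phi2 k - phi2 l|
      = ((2:ℝ) ^ m - 1) ^ 2 * ((2:ℝ) ^ m + 1) / (6 * 2 ^ m) := by
  have hterm : ∀ k ∈ range (2 ^ m), ∀ l ∈ range (2 ^ m), ((k : ℝ) / 2 ^ m) * |phi2 k - phi2 l|
      = (k : ℝ) * |(bitRev m k : ℝ) - bitRev m l| / (2 ^ m) ^ 2 := by
    intro k hk l hl
    rw [phi2_eq_bitRev (mem_range.mp hk), phi2_eq_bitRev (mem_range.mp hl), div_sub_div_same,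
      abs_div, abs_of_pos (pow_pos two_pos m : (0 : ℝ) < 2 ^ m)]
    ring
  simp only [sum_congr rfl fun k hk => sum_congr rfl (hterm k hk), ← sum_div,
    sum_sum_mul_abs_sub_of_reflect (fun k _ => bitRev_lt m k) (bitRev_injOn m)
      fun k hk => bitRev_two_pow_sub_one_sub m hk]
  push_cast
  field_simp
  ring

theorem hammersley_S7 (m : ℕ) (hm : 1 ≤ m) :
    ∑ k ∈ Finset.range (2 ^ m), ∑ l ∈ Finset.range (2 ^ m),
      ((k : ℝ) / 2 ^ m) * |phi2 k - phi2 l|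
      = ((2:ℝ) ^ m - 1) ^ 2 * ((2:ℝ) ^ m + 1) / (6 * 2 ^ m) :=
  hammersley_S7_general m
end

section
/- For any nonnegative real numbers x₀ ≤ x₁ ≤ ... ≤ x_{N−1} in [0,1), defining the periodic L₂ discrepancy squared as P = N²/6 + ∑_{n,m=0}^{N−1}(x_n − x_m)² − ∑_{n,m=0}^{N−1}|x_n − x_m| and the extreme L₂ discrepancy squared as E = (1/2)(N²/6 + ∑_{n,m=0}^{N−1}(x_n − x_m)² − 4∑_{n=0}^{N−1} n·x_n + 2(N−1)∑_{n=0}^{N−1} x_n), one has P = 2E. -/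
lemma abs_sum_key (x : ℕ → ℝ) : ∀ N : ℕ, (∀ n m, n ≤ m → m < N → x n ≤ x m) →
    (∑ n ∈ Finset.range N, ∑ m ∈ Finset.range N, |x n - x m|)
      = 4 * (∑ n ∈ Finset.range N, (n : ℝ) * x n)
        - 2 * ((N : ℝ) - 1) * (∑ n ∈ Finset.range N, x n) := by
  intro N
  induction N with
  | zero => simp
  | succ N ih =>
    intro hmono
    have hle : ∀ n, n < N → x n ≤ x N := fun n hn =>
      hmono n N (le_of_lt hn) (Nat.lt_succ_self N)
    have habs : ∀ n ∈ Finset.range N, |x n - x N| = x N - x n := by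
      intro n hn
      rw [abs_of_nonpos (sub_nonpos.mpr (hle n (Finset.mem_range.mp hn)))]
      ring
    have hIH := ih (fun n m h1 h2 => hmono n m h1 (Nat.lt_succ_of_lt h2))
    rw [Finset.sum_range_succ]
    have h1 : ∀ n ∈ Finset.range N,
        ∑ m ∈ Finset.range (N+1), |x n - x m|
          = (∑ m ∈ Finset.range N, |x n - x m|) + (x N - x n) := by
      intro n hn
      rw [Finset.sum_range_succ, habs n hn]
    have h2 : ∑ m ∈ Finset.range N, |x N - x m|
        = (N : ℝ) * x N - ∑ m ∈ Finset.range N, x m := by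
      rw [Finset.sum_congr rfl (fun m hm => (abs_sub_comm (x N) (x m)).trans (habs m hm)),
        Finset.sum_sub_distrib, Finset.sum_const, Finset.card_range, nsmul_eq_mul]
    have h3 : ∑ n ∈ Finset.range N, (x N - x n)
        = (N : ℝ) * x N - ∑ n ∈ Finset.range N, x n := by
      rw [Finset.sum_sub_distrib, Finset.sum_const, Finset.card_range, nsmul_eq_mul]
    rw [Finset.sum_congr rfl h1, Finset.sum_add_distrib, hIH, h3,
      Finset.sum_range_succ, sub_self, abs_zero, add_zero, h2,
      Finset.sum_range_succ (f := fun n => (n : ℝ) * x n), Finset.sum_range_succ x]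
    push_cast
    ring

theorem periodic_eq_two_extreme (N : ℕ) (hN : 1 ≤ N) (x : ℕ → ℝ)
    (hmono : ∀ n m, n ≤ m → m < N → x n ≤ x m)
    (hx : ∀ n < N, x n ∈ Set.Ico (0:ℝ) 1) :
    (N : ℝ) ^ 2 / 6
        + (∑ n ∈ Finset.range N, ∑ m ∈ Finset.range N, (x n - x m) ^ 2)
        - (∑ n ∈ Finset.range N, ∑ m ∈ Finset.range N, |x n - x m|)
      = 2 * ((1 / 2) * ((N : ℝ) ^ 2 / 6
        + (∑ n ∈ Finset.range N, ∑ m ∈ Finset.range N, (x n - x m) ^ 2)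
        - 4 * (∑ n ∈ Finset.range N, (n : ℝ) * x n)
        + 2 * ((N : ℝ) - 1) * (∑ n ∈ Finset.range N, x n))) := by
  rw [abs_sum_key x N hmono]
  ring
end

section
/- For m ≥ 1 and the regular grid Γ = {0, 1/m, ..., (m−1)/m}^d of N = m^d points in [0,1)^d, the quantity −N²/3^d + ∑_{p,q ∈ Γ} ∏_{i=1}^d (1/2 − |p_i − q_i| + (p_i − q_i)²) equals (m²/3 + 1/6)^d − (m²/3)^d. -/
open Finset

lemma gauss1 (n:ℕ) : ∑ b ∈ Finset.range n, (b:ℝ) = n*(n-1)/2 := by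
  induction n with
  | zero => simp
  | succ k ih => rw [Finset.sum_range_succ, ih]; push_cast; ring

lemma gauss2 (n:ℕ) : ∑ b ∈ Finset.range n, (b:ℝ)^2 = n*(n-1)*(2*n-1)/6 := by
  induction n with
  | zero => simp
  | succ k ih => rw [Finset.sum_range_succ, ih]; push_cast; ring

lemma absUp (k:ℕ) : ∑ a ∈ Finset.range k, |(a:ℝ) - k| = k*k - ∑ a ∈ Finset.range k, (a:ℝ) := by
  have e : ∀ a ∈ Finset.range k, |(a:ℝ) - k| = (k:ℝ) - a := by
    intro a ha
    rw [abs_sub_comm, abs_of_nonneg]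
    have := (Finset.mem_range.mp ha).le
    have : (a:ℝ) ≤ k := by exact_mod_cast this
    linarith
  rw [Finset.sum_congr rfl e, Finset.sum_sub_distrib, Finset.sum_const, Finset.card_range]
  ring

lemma sumAbs (n:ℕ) : ∑ a ∈ Finset.range n, ∑ b ∈ Finset.range n, |(a:ℝ) - b|
    = ((n:ℝ)^3 - n)/3 := by
  induction n with
  | zero => simp
  | succ k ih =>
    rw [Finset.sum_range_succ]
    simp only [Finset.sum_range_succ]
    rw [Finset.sum_add_distrib, ih, absUp k]
    have e2 : ∑ b ∈ Finset.range k, |(k:ℝ) - b| = k*k - ∑ b ∈ Finset.range k, (b:ℝ) := by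
      simpa [abs_sub_comm] using absUp k
    rw [e2, gauss1]
    simp only [sub_self, abs_zero]
    push_cast; ring

lemma sumSq (n:ℕ) : ∑ a ∈ Finset.range n, ∑ b ∈ Finset.range n, ((a:ℝ) - b)^2
    = (n:ℝ)^2*((n:ℝ)^2-1)/6 := by
  induction n with
  | zero => simp
  | succ k ih =>
    rw [Finset.sum_range_succ]
    simp only [Finset.sum_range_succ]
    rw [Finset.sum_add_distrib, ih]
    have e : ∑ a ∈ Finset.range k, ((a:ℝ) - k)^2
        = (∑ a ∈ Finset.range k, (a:ℝ)^2) - 2*k*(∑ a ∈ Finset.range k, (a:ℝ)) + k*k^2 := by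
      have h : ∀ a ∈ Finset.range k, ((a:ℝ) - k)^2 = (a:ℝ)^2 - 2*k*a + k^2 := by
        intro a _; ring
      rw [Finset.sum_congr rfl h, Finset.sum_add_distrib, Finset.sum_sub_distrib,
        Finset.mul_sum, Finset.sum_const, Finset.card_range]
      push_cast; ring
    have e2 : ∑ b ∈ Finset.range k, ((k:ℝ) - b)^2 = ∑ b ∈ Finset.range k, ((b:ℝ) - k)^2 := by
      apply Finset.sum_congr rfl; intro b _; ring
    rw [e2, e, gauss1, gauss2]
    push_cast; ring

lemma coordSum (m : ℕ) (hm : 1 ≤ m) :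
    ∑ a : Fin m, ∑ b : Fin m,
      (1 / 2 - |((a : ℝ)) / m - ((b : ℝ)) / m| + (((a : ℝ)) / m - ((b : ℝ)) / m) ^ 2)
    = (m:ℝ)^2/3 + 1/6 := by
  have hm0 : (m:ℝ) ≠ 0 := by positivity
  have habs : ∀ a b : Fin m, |((a : ℝ)) / m - ((b : ℝ)) / m| = |(a:ℝ) - b| / m := by
    intro a b
    rw [div_sub_div_same, abs_div, abs_of_nonneg (by positivity : (0:ℝ) ≤ (m:ℝ))]
  have hsq : ∀ a b : Fin m, (((a : ℝ)) / m - ((b : ℝ)) / m)^2 = ((a:ℝ) - b)^2 / m^2 := by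
    intro a b
    rw [div_sub_div_same, div_pow]
  simp only [habs, hsq]
  have expand : ∑ a : Fin m, ∑ b : Fin m,
      (1 / 2 - |(a:ℝ) - b| / m + ((a:ℝ) - b)^2 / m^2)
      = (m:ℝ)^2 * (1/2)
        - (∑ a : Fin m, ∑ b : Fin m, |(a:ℝ) - b|) / m
        + (∑ a : Fin m, ∑ b : Fin m, ((a:ℝ) - b)^2) / m^2 := by
    simp only [Finset.sum_add_distrib, Finset.sum_sub_distrib, Finset.sum_const,
      Finset.card_univ, Fintype.card_fin, Finset.sum_div]
    push_cast; ring
  rw [expand]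
  have h1 : ∑ a : Fin m, ∑ b : Fin m, |(a:ℝ) - b| = ((m:ℝ)^3 - m)/3 := by
    rw [← sumAbs m]
    rw [Fin.sum_univ_eq_sum_range (fun a => ∑ b : Fin m, |(a:ℝ) - b|)]
    apply Finset.sum_congr rfl
    intro a _
    rw [Fin.sum_univ_eq_sum_range (fun b => |(a:ℝ) - b|)]
  have h2 : ∑ a : Fin m, ∑ b : Fin m, ((a:ℝ) - b)^2 = (m:ℝ)^2*((m:ℝ)^2-1)/6 := by
    rw [← sumSq m]
    rw [Fin.sum_univ_eq_sum_range (fun a => ∑ b : Fin m, ((a:ℝ) - b)^2)]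
    apply Finset.sum_congr rfl
    intro a _
    rw [Fin.sum_univ_eq_sum_range (fun b => ((a:ℝ) - b)^2)]
  rw [h1, h2]
  field_simp
  ring

theorem grid_periodic_L2 (d m : ℕ) (hd : 1 ≤ d) (hm : 1 ≤ m) :
    -(((m : ℝ) ^ d) ^ 2 / 3 ^ d)
      + ∑ p : Fin d → Fin m, ∑ q : Fin d → Fin m,
          ∏ i : Fin d,
            (1 / 2 - |((p i : ℝ)) / m - ((q i : ℝ)) / m|
              + (((p i : ℝ)) / m - ((q i : ℝ)) / m) ^ 2)
      = ((m : ℝ) ^ 2 / 3 + 1 / 6) ^ d - ((m : ℝ) ^ 2 / 3) ^ d := by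
  set f : Fin m → Fin m → ℝ := fun a b =>
    (1 / 2 - |((a : ℝ)) / m - ((b : ℝ)) / m| + (((a : ℝ)) / m - ((b : ℝ)) / m) ^ 2) with hf
  have key : ∑ p : Fin d → Fin m, ∑ q : Fin d → Fin m, ∏ i : Fin d, f (p i) (q i)
      = (∑ a : Fin m, ∑ b : Fin m, f a b) ^ d := by
    have step1 : ∀ p : Fin d → Fin m,
        ∑ q : Fin d → Fin m, ∏ i : Fin d, f (p i) (q i)
          = ∏ i : Fin d, ∑ b : Fin m, f (p i) b := by
      intro p
      rw [Finset.prod_univ_sum (fun _ => Finset.univ) (fun i b => f (p i) b)]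
      rw [Fintype.piFinset_univ]
    simp only [step1]
    rw [show (∑ a : Fin m, ∑ b : Fin m, f a b) ^ d
        = ∏ _i : Fin d, ∑ a : Fin m, ∑ b : Fin m, f a b by
      rw [Finset.prod_const, Finset.card_univ, Fintype.card_fin]]
    rw [Finset.prod_univ_sum (fun _ => Finset.univ)
      (fun (_i : Fin d) (a : Fin m) => ∑ b : Fin m, f a b)]
    rw [Fintype.piFinset_univ]
  rw [key, coordSum m hm]
  have hpow : (((m : ℝ) ^ d) ^ 2 / 3 ^ d) = ((m : ℝ) ^ 2 / 3) ^ d := by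
    rw [div_pow, ← pow_mul, ← pow_mul, Nat.mul_comm]
  rw [hpow]
  ring
end
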